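/- In Γ^p, for every i ∈ ℤ/pℤ and n ≥ 0 one has σᵢ^{αᵢⁿ} = σᵢ^{σ_{i-1}ⁿ}; consequently, for all m, n ≥ 0, [σᵢ^{σ_{i-1}ⁿ}, σⱼ^{σ_{j-1}^m}] = 1 whenever 2 ≤ |i−j| ≤ p−2, and σᵢ^{σ_{i-1}^{n+1}} = σᵢ^{σ_{i-1}ⁿ·σ_{i-1}^{σ_{i-2}^m}} (indices mod p). -/

import Mathlib

/-- Conjugation `g ^ h = h⁻¹ g h`. -/
def cnj {G : Type*} [Group G] (g h : G) : G := h⁻¹ * g * h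

/-- The commutator `[g, h] = g⁻¹ h⁻¹ g h`. -/
def pbra {G : Type*} [Group G] (g h : G) : G := g⁻¹ * h⁻¹ * g * h

/-- The relators `α^p, ρ^p` of `Γ = ⟨α, ρ ∣ α^p, ρ^p⟩`. -/
def CpCpRels (p : ℕ) : Set (FreeGroup (Fin 2)) :=
  {FreeGroup.of 0 ^ p, FreeGroup.of 1 ^ p}

/-- `Γ = ⟨α, ρ ∣ α^p, ρ^p⟩`, the free product of two cyclic groups of order `p`. -/
def Gam (p : ℕ) : Type := PresentedGroup (CpCpRels p)

instance (p : ℕ) : Group (Gam p) := by unfold Gam; infer_instance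

/-- The generator `α` of `Γ`. -/
def αΓ (p : ℕ) : Gam p := PresentedGroup.of 0

/-- The generator `ρ` of `Γ`. -/
def ρΓ (p : ℕ) : Gam p := PresentedGroup.of 1

/-- `αᵢ ∈ Γ^p`: the element whose `i`-th coordinate is `α`, others trivial. -/
def αt (p : ℕ) (i : ZMod p) : ZMod p → Gam p := Pi.mulSingle i (αΓ p)

/-- `ρᵢ ∈ Γ^p`: the element whose `i`-th coordinate is `ρ`, others trivial. -/
def ρt (p : ℕ) (i : ZMod p) : ZMod p → Gam p := Pi.mulSingle i (ρΓ p)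

/-- `σᵢ = ρᵢ·α_{i+1} ∈ Γ^p` (indices mod `p`). -/
def σt (p : ℕ) (i : ZMod p) : ZMod p → Gam p := ρt p i * αt p (i + 1)

/-! `σᵢ` is supported on the coordinates `{i, i + 1}`. Hence a conjugate `σᵢ^x` only depends on
the coordinates `i, i + 1` of `x`, and conjugates of `σᵢ` and `σⱼ` commute as soon as
`{i, i + 1}` and `{j, j + 1}` are disjoint. Since `2 ≠ 0` in `ℤ/pℤ`, on `{i, i + 1}` the element
`σ_{i-1}` agrees both with `αᵢ` and with `σ_{i-1}^{σ_{i-2}^m}`, which gives the first and the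
third relation. -/

open Function Set

section Conjugation

variable {G : Type*} [Group G]

lemma cnj_one_left (h : G) : cnj 1 h = 1 := by
  simp [cnj]

lemma cnj_mul_right (g a b : G) : cnj g (a * b) = cnj (cnj g a) b := by
  simp only [cnj, mul_inv_rev, mul_assoc]

lemma pbra_eq_one_of_commute {g h : G} (hgh : Commute g h) : pbra g h = 1 := by
  rw [pbra, mul_assoc, hgh.eq]
  group

end Conjugation

namespace Pi

variable {ι G : Type*} [Group G]

lemma cnj_apply (g h : ι → G) (k : ι) : cnj g h k = cnj (g k) (h k) := rfl

lemma mulSupport_cnj_subset (g h : ι → G) : mulSupport (cnj g h) ⊆ mulSupport g := by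
  intro k hk hgk
  exact hk (by rw [cnj_apply, hgk, cnj_one_left])

lemma cnj_congr_of_eqOn_mulSupport {g x y : ι → G} (hxy : EqOn x y (mulSupport g)) :
    cnj g x = cnj g y := by
  funext k
  by_cases hk : g k = 1
  · rw [cnj_apply, cnj_apply, hk, cnj_one_left, cnj_one_left]
  · rw [cnj_apply, cnj_apply, hxy hk]

lemma commute_of_disjoint_mulSupport {g h : ι → G}
    (hgh : Disjoint (mulSupport g) (mulSupport h)) : Commute g h := by
  funext k
  by_cases hk : g k = 1
  · simp [hk]
  · simp [notMem_mulSupport.mp (disjoint_left.mp hgh hk)]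

end Pi

variable {p : ℕ}

lemma mulSupport_σt_subset (i : ZMod p) : mulSupport (σt p i) ⊆ {i, i + 1} :=
  (mulSupport_mul _ _).trans
    (union_subset_union Pi.mulSupport_mulSingle_subset Pi.mulSupport_mulSingle_subset)

lemma σt_apply_of_ne {i k : ZMod p} (hi : k ≠ i) (hi' : k ≠ i + 1) : σt p i k = 1 :=
  notMem_mulSupport.mp fun hk => by
    rcases mulSupport_σt_subset i hk with h | h <;> contradiction

lemma σt_apply_add_one (h1 : (1 : ZMod p) ≠ 0) (i : ZMod p) : σt p i (i + 1) = αΓ p := by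
  simp [σt, ρt, αt, Pi.mulSingle_eq_of_ne (add_ne_left.mpr h1)]

section TwoNeZero

variable (h2 : (2 : ZMod p) ≠ 0) (i : ZMod p)
include h2

lemma σt_sub_one_apply_add_one : σt p (i - 1) (i + 1) = 1 :=
  σt_apply_of_ne (fun h => h2 (by linear_combination h))
    (fun h => h2 (by linear_combination 2 * h))

lemma σt_sub_two_apply : σt p (i - 2) i = 1 :=
  σt_apply_of_ne (fun h => h2 (by linear_combination h))
    (fun h => h2 (by linear_combination 2 * h))

lemma eqOn_αt_pow_σt_sub_one_pow (n : ℕ) :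
    EqOn (αt p i ^ n) (σt p (i - 1) ^ n) {i, i + 1} := by
  have h1 : (1 : ZMod p) ≠ 0 := fun h => h2 (by linear_combination 2 * h)
  rintro k (rfl | rfl)
  · simpa [αt] using congrArg (· ^ n) (σt_apply_add_one h1 (k - 1)).symm
  · rw [Pi.pow_apply, Pi.pow_apply, σt_sub_one_apply_add_one h2]
    simp [αt, Pi.mulSingle_eq_of_ne (add_ne_left.mpr h1)]

lemma eqOn_σt_sub_one_cnj (m : ℕ) :
    EqOn (σt p (i - 1)) (cnj (σt p (i - 1)) (σt p (i - 2) ^ m)) {i, i + 1} := by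
  rintro k (rfl | rfl)
  · simp [σt_sub_two_apply h2, cnj]
  · rw [Pi.cnj_apply, σt_sub_one_apply_add_one h2, cnj_one_left]

end TwoNeZero

lemma disjoint_pair_of_sub_ne {R : Type*} [Ring R] {i j : R} (h0 : i - j ≠ 0)
    (h1 : i - j ≠ 1) (hm1 : i - j ≠ -1) : Disjoint ({i, i + 1} : Set R) {j, j + 1} := by
  simp only [disjoint_insert_left, disjoint_singleton_left, mem_insert_iff,
    mem_singleton_iff]
  grind

lemma ZMod.two_ne_zero_of_three_le (hp : 3 ≤ p) : (2 : ZMod p) ≠ 0 := by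
  intro h
  have := Nat.le_of_dvd two_pos ((ZMod.natCast_eq_zero_iff 2 p).mp (by exact_mod_cast h))
  omega

/-- In `Γ^p`, for every `i ∈ ℤ/pℤ` and `n ≥ 0` one has
`σᵢ^{αᵢⁿ} = σᵢ^{σ_{i-1}ⁿ}`; consequently, for all `m, n ≥ 0`,
`[σᵢ^{σ_{i-1}ⁿ}, σⱼ^{σ_{j-1}^m}] = 1` whenever `2 ≤ |i-j| ≤ p-2`
(equivalently `i - j ∉ {0, 1, -1}` in `ℤ/pℤ`), and
`σᵢ^{σ_{i-1}^{n+1}} = σᵢ^{σ_{i-1}ⁿ·σ_{i-1}^{σ_{i-2}^m}}` (indices mod `p`). -/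
theorem sigma_iterated_relations_in_GammaPow (p : ℕ) (hp : 3 ≤ p) :
    (∀ (i : ZMod p) (n : ℕ),
      cnj (σt p i) (αt p i ^ n) = cnj (σt p i) (σt p (i - 1) ^ n)) ∧
    (∀ (i j : ZMod p) (n m : ℕ), i - j ≠ 0 → i - j ≠ 1 → i - j ≠ -1 →
      pbra (cnj (σt p i) (σt p (i - 1) ^ n))
        (cnj (σt p j) (σt p (j - 1) ^ m)) = 1) ∧
    (∀ (i : ZMod p) (n m : ℕ),
      cnj (σt p i) (σt p (i - 1) ^ (n + 1)) =
        cnj (σt p i) (σt p (i - 1) ^ n *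
          cnj (σt p (i - 1)) (σt p (i - 2) ^ m))) := by
  have h2 := ZMod.two_ne_zero_of_three_le hp
  refine ⟨fun i n => ?_, fun i j n m h0 h1 hm1 => ?_, fun i n m => ?_⟩
  · exact Pi.cnj_congr_of_eqOn_mulSupport
      ((eqOn_αt_pow_σt_sub_one_pow h2 i n).mono (mulSupport_σt_subset i))
  · refine pbra_eq_one_of_commute (Pi.commute_of_disjoint_mulSupport ?_)
    exact (disjoint_pair_of_sub_ne h0 h1 hm1).mono
      ((Pi.mulSupport_cnj_subset _ _).trans (mulSupport_σt_subset i))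
      ((Pi.mulSupport_cnj_subset _ _).trans (mulSupport_σt_subset j))
  · rw [pow_succ, cnj_mul_right, cnj_mul_right]
    exact Pi.cnj_congr_of_eqOn_mulSupport ((eqOn_σt_sub_one_cnj h2 i m).mono
      ((Pi.mulSupport_cnj_subset _ _).trans (mulSupport_σt_subset i)))
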